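/- arXiv:1703.07429 — 6 statements merged into one kernel-verified Lean document; each statement's English description precedes it below -/
import Mathlib

section
/- Let U be a countable homogeneous structure such that Aut(U) has a trivial center, let ι be a monoid endomorphism of the self-embedding monoid Emb(U) that fixes every automorphism of U, and let h ∈ Emb(U) be such that the image of h is superhomogeneous in U. Then ι(h) = h. -/
open FirstOrder Language Set Cardinal Topology

universe u v w

namespace Paper

/-- The topology of pointwise convergence on `X → X` (product topology, `X` discrete). -/
def ptTop (X : Type*) : TopologicalSpace (X → X) :=
  ⨅ x : X, TopologicalSpace.induced (fun f => f x) ⊥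

/-- The topology of pointwise convergence on the symmetric group on `X`
(subspace topology inherited from `X → X`). -/
def symTop (X : Type*) : TopologicalSpace (Equiv.Perm X) :=
  TopologicalSpace.induced (fun g : Equiv.Perm X => ⇑g) (ptTop X)

/-- The subspace topology (of the topology of pointwise convergence) on a
permutation group on `X`. -/
def subgroupTop {X : Type*} (H : Subgroup (Equiv.Perm X)) : TopologicalSpace H :=
  TopologicalSpace.induced (fun h : H => (⇑(h : Equiv.Perm X) : X → X)) (ptTop X)

/-- The subspace topology (of the topology of pointwise convergence) on a
transformation monoid on `X`. -/
def submonoidTop {X : Type*} (N : Submonoid (Function.End X)) : TopologicalSpace N :=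
  TopologicalSpace.induced (fun n : N => ((n : Function.End X) : X → X)) (ptTop X)

variable (L : FirstOrder.Language.{u, v}) (M : Type w) [L.Structure M]

/-- The monoid of self-embeddings of a structure, as a submonoid of `Function.End M`. -/
def embM : Submonoid (Function.End M) where
  carrier := {f | ∃ e : M ↪[L] M, ⇑e = f}
  one_mem' := ⟨Embedding.refl L M, rfl⟩
  mul_mem' := by
    rintro f g ⟨e₁, rfl⟩ ⟨e₂, rfl⟩
    exact ⟨e₁.comp e₂, rfl⟩

/-- The monoid of elementary self-embeddings of a structure, as a submonoid of
`Function.End M`. -/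
def eembM : Submonoid (Function.End M) where
  carrier := {f | ∃ e : M ↪ₑ[L] M, ⇑e = f}
  one_mem' := ⟨ElementaryEmbedding.refl L M, rfl⟩
  mul_mem' := by
    rintro f g ⟨e₁, rfl⟩ ⟨e₂, rfl⟩
    exact ⟨e₁.comp e₂, rfl⟩

/-- The automorphism group of a structure, as a subgroup of `Equiv.Perm M`. -/
def autG : Subgroup (Equiv.Perm M) where
  carrier := {g | ∃ e : M ≃[L] M, ⇑e = ⇑g}
  one_mem' := ⟨Language.Equiv.refl L M, rfl⟩
  mul_mem' := by
    rintro g h ⟨e₁, he₁⟩ ⟨e₂, he₂⟩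
    exact ⟨e₁.comp e₂, funext fun x => by simp [he₁, he₂]⟩
  inv_mem' := by
    rintro g ⟨e, he⟩
    refine ⟨e.symm, funext fun x => e.injective ?_⟩
    rw [Language.Equiv.apply_symm_apply, he]
    simp



variable (L : FirstOrder.Language.{u, v}) (M : Type w) [L.Structure M]

/-- `M` is `κ`-saturated: for every tuple `ā` over `M` of length `< κ`, every elementary
extension `N` of `M` and every `b ∈ N` there is `c ∈ M` with `(N, āb) ≡ (M, āc)`. -/
def IsSaturatedAt (κ : Cardinal.{w}) : Prop :=
  ∀ (α : Type w), #α < κ →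
    ∀ (N : Type w) (_ : L.Structure N) (e : M ↪ₑ[L] N) (a : α → M) (b : N),
      ∃ c : M, ∀ φ : L.Formula (α ⊕ Unit),
        φ.Realize (Sum.elim (⇑e ∘ a) fun _ => b) ↔ φ.Realize (Sum.elim a fun _ => c)

/-- `M` is saturated if it is `|M|`-saturated. -/
def IsSaturated : Prop := IsSaturatedAt L M #M

/-- A substructure `V` of `M` is superhomogeneous in `M` if (1) every local isomorphism of `V`
(an isomorphism between finitely generated substructures of `V`) extends to an automorphism
of `M` whose restriction to `V` is an automorphism of `V`, and (2) for every `y ∉ V` there is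
an automorphism of `M` fixing `V` pointwise that moves `y`. -/
def IsSuperhomogeneous (V : L.Substructure M) : Prop :=
  (∀ (S : L.Substructure M), S ≤ V → S.FG → ∀ f : S ↪[L] M, (∀ s : S, f s ∈ V) →
      ∃ g : M ≃[L] M, (∀ s : S, g s = f s) ∧ ⇑g '' (V : Set M) = (V : Set M)) ∧
  (∀ y : M, y ∉ V → ∃ g : M ≃[L] M, (∀ v ∈ V, g v = v) ∧ g y ≠ y)

/-- The theory of `M` has quantifier elimination: every formula is equivalent, modulo the
theory of `M`, to a quantifier-free formula. -/
def HasQE : Prop :=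
  ∀ (n : ℕ) (φ : L.Formula (Fin n)), ∃ ψ : L.Formula (Fin n),
    ψ.IsQF ∧ (φ ⇔[L.completeTheory M] ψ)

/-- A countable saturated structure is smooth if its signature is countable and its theory
has quantifier elimination. -/
def Smooth : Prop :=
  L.card ≤ ℵ₀ ∧ Countable M ∧ IsSaturated L M ∧ HasQE L M

/-- The center of the automorphism group of `M` is trivial. -/
def TrivialAutCenter : Prop :=
  ∀ e : M ≃[L] M, (∀ g : M ≃[L] M, ∀ x : M, e (g x) = g (e x)) → ∀ x : M, e x = x

/-- The language with a single relation symbol of arity `n`. -/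
def oneRel (n : ℕ) : FirstOrder.Language :=
  ⟨fun _ => Empty, fun m => PLift (m = n)⟩

/-- The structure on `M` over `oneRel n` given by interpreting the relation symbol
as `R ⊆ Mⁿ`. -/
def oneRelStructure {n : ℕ} {M : Type w} (R : Set (Fin n → M)) : (oneRel n).Structure M where
  funMap := fun f _ => f.elim
  RelMap := fun {m} r v => R (fun i => v (Fin.cast r.down.symm i))

/-- A structure `M` is splendid if for every extension of the language by a single relation
symbol `ρ` and every structure `N` for the extended language whose reduct is elementarily
equivalent to `M`, the symbol `ρ` can be interpreted in `M` in such a way that the resulting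
expansion is elementarily equivalent to `N`. -/
def Splendid : Prop :=
  ∀ (n : ℕ) (N : Type w) (SN : L.Structure N) (RN : Set (Fin n → N)),
    (letI := SN; M ≅[L] N) →
    ∃ RM : Set (Fin n → M),
      letI := SN
      letI : (oneRel n).Structure N := oneRelStructure RN
      letI : (oneRel n).Structure M := oneRelStructure RM
      M ≅[L.sum (oneRel n)] N

/-- A structure `M` is `κ`-big if all of its expansions by constants `(M, ā)`, for tuples `ā`
of length `< κ`, are splendid. -/
def IsBig (κ : Cardinal.{w}) : Prop :=
  ∀ (α : Type w), #α < κ → ∀ a : α → M,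
    letI : (constantsOn α).Structure M := constantsOn.structure a
    Splendid (L[[α]]) M

/-!
Write `ι h = h ∘ e`: an automorphism fixing the image `V` of `h` pointwise fixes `h`, hence
fixes `ι h`, so by superhomogeneity the image of `ι h` lies in `V` and `e` exists. Given an
automorphism `g` and a finite set, conjugating `g` by `h` gives a local isomorphism of `V`;
superhomogeneity extends it to an automorphism `γ` with `γ ∘ h = h ∘ β`, where `β` agrees with
`g` on the finite set. Applying `ι` gives `γ ∘ ι h = ι h ∘ β`, from which `e` commutes with `g`.
By ultrahomogeneity an embedding commuting with all automorphisms is onto, so `e` is a central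
automorphism, hence the identity.
-/

end Paper

namespace FirstOrder.Language

variable {L : Language} {M N P : Type*} [L.Structure M] [L.Structure N] [L.Structure P]

namespace Embedding

noncomputable def toEquivOfSurjective (f : M ↪[L] N) (hf : Function.Surjective f) :
    M ≃[L] N where
  toEquiv := Equiv.ofBijective f ⟨f.injective, hf⟩
  map_fun' := f.map_fun'
  map_rel' := f.map_rel'

theorem closure_range (f : M ↪[L] N) : Substructure.closure L (Set.range f) = f.toHom.range := by
  rw [← coe_toHom, ← Hom.range_coe, Substructure.closure_eq]

theorem apply_equivRange_symm (f : M ↪[L] N) (y : f.toHom.range) : f (f.equivRange.symm y) = y := by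
  rw [← equivRange_apply, Language.Equiv.apply_symm_apply]

theorem exists_comp_eq_of_forall_mem_range (f : N ↪[L] M) (g : P ↪[L] M)
    (hg : ∀ x, g x ∈ f.toHom.range) : ∃ e : P ↪[L] N, ∀ x, f (e x) = g x :=
  ⟨f.equivRange.symm.toEmbedding.comp (g.codRestrict _ hg), fun x =>
    f.apply_equivRange_symm (g.codRestrict _ hg x)⟩

theorem exists_conj_of_image_range_eq (f : N ↪[L] M) (γ : M ≃[L] M)
    (hγ : ⇑γ '' f.toHom.range = f.toHom.range) : ∃ β : N ≃[L] N, ∀ x, γ (f x) = f (β x) := by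
  have hmem (x : N) : γ (f x) ∈ f.toHom.range := by
    rw [← SetLike.mem_coe, ← hγ]
    exact Set.mem_image_of_mem _ (Hom.mem_range_self _ x)
  obtain ⟨e, he⟩ := f.exists_comp_eq_of_forall_mem_range (γ.toEmbedding.comp f) hmem
  have hsurj : Function.Surjective e := by
    intro y
    have hy : f y ∈ ⇑γ '' f.toHom.range := by rw [hγ]; exact Hom.mem_range_self _ y
    obtain ⟨_, ⟨z, rfl⟩, hz⟩ := hy
    exact ⟨z, f.injective (by rw [he z, ← hz]; rfl)⟩
  exact ⟨e.toEquivOfSurjective hsurj, fun x => (he x).symm⟩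

end Embedding

theorem IsUltrahomogeneous.surjective_of_commute (hM : L.IsUltrahomogeneous M) (e : M ↪[L] M)
    (he : ∀ (g : M ≃[L] M) (x : M), e (g x) = g (e x)) : Function.Surjective e := by
  intro y
  obtain ⟨δ, hδ⟩ := hM _ (Substructure.fg_closure_singleton y) (e.comp (Substructure.subtype _))
  have hy : e y = δ y := congrArg (fun f => f ⟨y, Substructure.subset_closure rfl⟩) hδ
  exact ⟨δ.symm y, by rw [he, hy, Language.Equiv.symm_apply_apply]⟩

end FirstOrder.Language

namespace Paper

variable {L : FirstOrder.Language.{u, v}} {M N : Type w} [L.Structure M] [L.Structure N]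

theorem IsSuperhomogeneous.mem_of_forall_fixed {V : L.Substructure M}
    (hV : IsSuperhomogeneous L M V) {y : M}
    (hy : ∀ g : M ≃[L] M, (∀ v ∈ V, g v = v) → g y = y) : y ∈ V := by
  by_contra hyV
  obtain ⟨g, hgV, hgy⟩ := hV.2 y hyV
  exact hgy (hy g hgV)

theorem IsSuperhomogeneous.exists_conj_eqOn (f : N ↪[L] M)
    (hf : IsSuperhomogeneous L M f.toHom.range) (g : N ≃[L] N) {s : Set N} (hs : s.Finite) :
    ∃ γ : M ≃[L] M, ∃ β : N ≃[L] N, (∀ x, γ (f x) = f (β x)) ∧ Set.EqOn β g s := by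
  set S := Substructure.closure L (f '' s)
  have hSV : S ≤ f.toHom.range := Substructure.closure_le.2 fun _ ⟨x, _, hx⟩ => ⟨x, hx⟩
  let φ : S ↪[L] M :=
    (f.comp (g.toEmbedding.comp f.equivRange.symm.toEmbedding)).comp (Substructure.inclusion hSV)
  obtain ⟨γ, hγφ, hγV⟩ :=
    hf.1 S hSV (Substructure.fg_closure (hs.image f)) φ fun _ => Hom.mem_range_self _ _
  obtain ⟨β, hβ⟩ := f.exists_conj_of_image_range_eq γ hγV
  refine ⟨γ, β, hβ, fun a ha => f.injective ?_⟩
  have hfa : f a ∈ S := Substructure.subset_closure (Set.mem_image_of_mem f ha)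
  have hsymm : f.equivRange.symm ⟨f a, Hom.mem_range_self _ a⟩ = a :=
    f.equivRange.symm_apply_apply a
  rw [← hβ, hγφ ⟨f a, hfa⟩]
  show f (g (f.equivRange.symm ⟨f a, _⟩)) = f (g a)
  rw [hsymm]

def FixesAut (ι : embM L M →* embM L M) : Prop :=
  ∀ f : embM L M, (∃ e : M ≃[L] M, (⇑e : M → M) = (f : Function.End M)) → ι f = f

def autEmb (g : M ≃[L] M) : embM L M := ⟨⇑g, g.toEmbedding, g.coe_toEmbedding⟩

theorem FixesAut.apply_comm {ι : embM L M →* embM L M} (hι : FixesAut ι) {h : embM L M}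
    {γ β : M ≃[L] M} (hγβ : ∀ x, γ ((h : Function.End M) x) = (h : Function.End M) (β x))
    (x : M) : γ ((ι h : Function.End M) x) = (ι h : Function.End M) (β x) := by
  have hmul : autEmb γ * h = h * autEmb β := Subtype.ext (funext hγβ)
  have key : autEmb γ * ι h = ι h * autEmb β := by
    rw [← hι (autEmb γ) ⟨γ, rfl⟩, ← hι (autEmb β) ⟨β, rfl⟩, ← map_mul, ← map_mul, hmul]
  exact congrFun (congrArg Subtype.val key) x

theorem FixesAut.commute_of_superhomogeneous {ι : embM L M →* embM L M} (hι : FixesAut ι)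
    {h : embM L M} {H e : M ↪[L] M} (hH : ⇑H = (h : Function.End M))
    (hsup : IsSuperhomogeneous L M H.toHom.range)
    (he : ∀ x, H (e x) = (ι h : Function.End M) x) (g : M ≃[L] M) (x : M) :
    e (g x) = g (e x) := by
  obtain ⟨γ, β, hγβ, hβg⟩ := hsup.exists_conj_eqOn H g (Set.toFinite {x, e x})
  have hK : ∀ y, γ ((ι h : Function.End M) y) = (ι h : Function.End M) (β y) :=
    hι.apply_comm fun y => by rw [← hH]; exact hγβ y
  apply H.injective
  calc H (e (g x)) = H (e (β x)) := by rw [hβg (Set.mem_insert _ _)]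
    _ = γ (H (e x)) := by rw [he, he, hK]
    _ = H (β (e x)) := hγβ _
    _ = H (g (e x)) := by rw [hβg (Set.mem_insert_of_mem _ rfl)]

theorem statement_4_general (L : FirstOrder.Language.{u, v}) (U : Type w) [L.Structure U]
    (hhom : L.IsUltrahomogeneous U) (hcenter : TrivialAutCenter L U)
    (ι : embM L U →* embM L U)
    (hfix : ∀ f : embM L U, (∃ e : U ≃[L] U, (⇑e : U → U) = (f : Function.End U)) → ι f = f)
    (h : embM L U)
    (hsup : IsSuperhomogeneous L U
      (Substructure.closure L (Set.range ((h : Function.End U) : U → U)))) :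
    ι h = h := by
  have hι : FixesAut ι := hfix
  obtain ⟨H, hH⟩ := h.2
  obtain ⟨K, hK⟩ := (ι h).2
  rw [← hH, H.closure_range] at hsup
  have hrange (x : U) : K x ∈ H.toHom.range := by
    refine hsup.mem_of_forall_fixed fun g hg => ?_
    rw [hK]
    exact hι.apply_comm (β := Language.Equiv.refl L U)
      (fun y => by rw [← hH]; exact hg _ (Hom.mem_range_self _ y)) x
  obtain ⟨e, he⟩ := H.exists_comp_eq_of_forall_mem_range K hrange
  have hcomm : ∀ (g : U ≃[L] U) (x : U), e (g x) = g (e x) :=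
    hι.commute_of_superhomogeneous hH hsup fun x => by rw [he, hK]
  have heid : ∀ x, e x = x :=
    hcenter (e.toEquivOfSurjective (hhom.surjective_of_commute e hcomm)) hcomm
  apply Subtype.ext
  rw [← hK, ← hH]
  funext x
  rw [← he, heid]

/-- Let `U` be a countable homogeneous structure whose automorphism group has
a trivial center, let `ι` be a monoid endomorphism of `Emb(U)` fixing every automorphism, and
let `h` be a self-embedding whose image is superhomogeneous in `U`. Then `ι h = h`. -/
theorem statement_4 (L : FirstOrder.Language.{u, v}) (U : Type w) [L.Structure U] [Countable U]
    (hhom : L.IsUltrahomogeneous U) (hcenter : TrivialAutCenter L U)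
    (ι : embM L U →* embM L U)
    (hfix : ∀ f : embM L U, (∃ e : U ≃[L] U, (⇑e : U → U) = (f : Function.End U)) → ι f = f)
    (h : embM L U)
    (hsup : IsSuperhomogeneous L U
      (Substructure.closure L (Set.range ((h : Function.End U) : U → U)))) :
    ι h = h :=
  statement_4_general L U hhom hcenter ι hfix h hsup

end Paper
end

section
/- Let A be a structure, let f be a self-embedding of A, and let α be an automorphism of A whose restriction to the image of f is an automorphism of the substructure generated by im(f) in A. Then there exists an automorphism β of A such that α ∘ f = f ∘ β and α⁻¹ ∘ f = f ∘ β⁻¹. -/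
open FirstOrder Language Set Cardinal Topology

universe u v w

namespace Paper

variable (L : FirstOrder.Language.{u, v}) (M : Type w) [L.Structure M]

variable (L : FirstOrder.Language.{u, v}) (M : Type w) [L.Structure M]

/-- Let `f` be a self-embedding of a structure `A` and let `α` be an
automorphism of `A` whose restriction to the substructure generated by the image of `f` is an
automorphism of that substructure. Then there is an automorphism `β` of `A` with
`α ∘ f = f ∘ β` and `α⁻¹ ∘ f = f ∘ β⁻¹`. -/
theorem statement_7 (L : FirstOrder.Language.{u, v}) (A : Type w) [L.Structure A]
    (f : A ↪[L] A) (α : A ≃[L] A)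
    (hα : ⇑α '' ((Substructure.closure L (Set.range ⇑f) : L.Substructure A) : Set A) =
      ((Substructure.closure L (Set.range ⇑f) : L.Substructure A) : Set A)) :
    ∃ β : A ≃[L] A, ⇑α ∘ ⇑f = ⇑f ∘ ⇑β ∧ ⇑α.symm ∘ ⇑f = ⇑f ∘ ⇑β.symm := by
  have hr : Set.range ⇑f = ((Hom.range f.toHom : L.Substructure A) : Set A) := by
    rw [Hom.range_coe, f.coe_toHom]
  have hcl : ((Substructure.closure L (Set.range ⇑f) : L.Substructure A) : Set A)
      = Set.range ⇑f := by rw [hr, Substructure.closure_eq]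
  rw [hcl] at hα
  have h1 : ∀ a : A, ∃ b : A, f b = α (f a) := by
    intro a
    have : α (f a) ∈ ⇑α '' Set.range ⇑f := ⟨f a, ⟨a, rfl⟩, rfl⟩
    rw [hα] at this
    exact this
  have h2 : ∀ a : A, ∃ b : A, f b = α.symm (f a) := by
    intro a
    have hmem : f a ∈ Set.range ⇑f := ⟨a, rfl⟩
    rw [← hα] at hmem
    obtain ⟨x, ⟨b, rfl⟩, hx⟩ := hmem
    exact ⟨b, by rw [← hx]; simp⟩
  choose g hg using h1
  choose g' hg' using h2
  have hgg' : ∀ a, g (g' a) = a := fun a =>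
    f.injective (by rw [hg, hg']; simp)
  have hg'g : ∀ a, g' (g a) = a := fun a =>
    f.injective (by rw [hg', hg]; simp)
  refine ⟨⟨⟨g, g', hg'g, hgg'⟩, ?_, ?_⟩, ?_, ?_⟩
  · intro n F x
    show g (Structure.funMap F x) = Structure.funMap F (g ∘ x)
    apply f.injective
    rw [hg, f.map_fun, α.map_fun, f.map_fun]
    congr 1
    funext i
    exact (hg (x i)).symm
  · intro n R x
    show Structure.RelMap R (g ∘ x) ↔ Structure.RelMap R x
    rw [← f.map_rel]
    have : ⇑f ∘ g ∘ x = ⇑α ∘ ⇑f ∘ x := funext fun i => hg (x i)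
    rw [this, α.map_rel, f.map_rel]
  · funext a; exact (hg a).symm
  · funext a; exact (hg' a).symm

end Paper
end

section
/- Let A be a countable homogeneous structure and let f be a self-embedding of A whose image is superhomogeneous in A. Then the set B(f) := {β ∈ Aut(A) : there exists α ∈ Aut(A) with α ∘ f = f ∘ β} is dense in Aut(A) with respect to the topology of pointwise convergence. -/
open FirstOrder Language Set Cardinal Topology

universe u v w

namespace Paper

variable (L : FirstOrder.Language.{u, v}) (M : Type w) [L.Structure M]

variable (L : FirstOrder.Language.{u, v}) (M : Type w) [L.Structure M]

/-- Let `A` be a countable homogeneous structure and `f` a self-embedding of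
`A` whose image is superhomogeneous in `A`. Then `B(f) = {β ∈ Aut(A) | ∃ α, α ∘ f = f ∘ β}`
is dense in `Aut(A)` for the topology of pointwise convergence. -/
theorem statement_9 (L : FirstOrder.Language.{u, v}) (A : Type w) [L.Structure A] [Countable A]
    (hhom : L.IsUltrahomogeneous A) (f : A ↪[L] A)
    (hsup : IsSuperhomogeneous L A f.toHom.range) :
    @Dense (A ≃[L] A) (TopologicalSpace.induced (fun e : A ≃[L] A => (⇑e : A → A)) (ptTop A))
      {β : A ≃[L] A | ∃ α : A ≃[L] A, ⇑α ∘ ⇑f = ⇑f ∘ ⇑β} := by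
  classical
  set V := f.toHom.range with hV
  -- key combinatorial step: approximate any automorphism on a finite set by a member of B(f)
  have key : ∀ (β : A ≃[L] A) (I : Finset A),
      ∃ γ : A ≃[L] A, (∃ α : A ≃[L] A, ⇑α ∘ ⇑f = ⇑f ∘ ⇑γ) ∧ ∀ a ∈ I, γ a = β a := by
    intro β I
    set W : L.Substructure A := Substructure.closure L (⇑f '' ↑I) with hW
    have hWV : W ≤ V := (Substructure.closure_le).2 (by rintro _ ⟨a, _, rfl⟩; exact ⟨a, rfl⟩)
    have hWfg : W.FG := Substructure.fg_closure ((I.finite_toSet).image _)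
    have hfsymm : ∀ v : V, f (f.equivRange.symm v) = (v : A) := by
      intro v
      conv_rhs => rw [← Language.Equiv.apply_symm_apply f.equivRange v]
      exact (Embedding.equivRange_apply f _).symm
    let h : W ↪[L] A :=
      f.comp (β.toEmbedding.comp (f.equivRange.symm.toEmbedding.comp (Substructure.inclusion hWV)))
    have hmem : ∀ s : W, h s ∈ V := fun s => ⟨_, rfl⟩
    obtain ⟨g, hg1, hg2⟩ := hsup.1 W hWV hWfg h hmem
    have hcod : ∀ v : V, g (V.subtype v) ∈ V := by
      intro v
      have : g (V.subtype v) ∈ ⇑g '' (V : Set A) := ⟨(v : A), v.2, rfl⟩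
      rwa [hg2] at this
    let e : V ↪[L] V := FirstOrder.Language.Embedding.codRestrict V (g.toEmbedding.comp V.subtype) hcod
    let γ0 : A ↪[L] A := f.equivRange.symm.toEmbedding.comp (e.comp f.equivRange.toEmbedding)
    have hfγ0 : ∀ a : A, f (γ0 a) = g (f a) := by
      intro a
      show f (f.equivRange.symm (e (f.equivRange a))) = g (f a)
      rw [hfsymm]
      show g ((f.equivRange a : A)) = g (f a)
      rw [Embedding.equivRange_apply]
    have hsurj : Function.Surjective γ0 := by
      intro b
      have hb : f b ∈ ⇑g '' (V : Set A) := by rw [hg2]; exact ⟨b, rfl⟩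
      obtain ⟨v, hvV, hgv⟩ := hb
      obtain ⟨a, rfl⟩ := hvV
      refine ⟨a, f.injective ?_⟩
      rw [hfγ0]
      exact hgv
    let γ : A ≃[L] A :=
      { Equiv.ofBijective (⇑γ0) ⟨γ0.injective, hsurj⟩ with
        map_fun' := γ0.map_fun'
        map_rel' := γ0.map_rel' }
    have hγγ0 : ∀ a : A, γ a = γ0 a := fun _ => rfl
    refine ⟨γ, ⟨g, funext fun a => ?_⟩, fun a ha => ?_⟩
    · show g (f a) = f (γ a)
      rw [hγγ0, hfγ0]
    · have hfa : f a ∈ W := Substructure.subset_closure (Set.mem_image_of_mem _ ha)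
      have h1 := hg1 ⟨f a, hfa⟩
      have h2 : h ⟨f a, hfa⟩ = f (β a) := by
        show f (β (f.equivRange.symm (Substructure.inclusion hWV ⟨f a, hfa⟩))) = f (β a)
        have harg : f.equivRange.symm (Substructure.inclusion hWV ⟨f a, hfa⟩) = a :=
          f.injective (by rw [hfsymm]; rfl)
        rw [harg]
      apply f.injective
      rw [hγγ0, hfγ0]
      show g ((⟨f a, hfa⟩ : W) : A) = f (β a)
      rw [h1, h2]
  -- topology part
  letI tA : TopologicalSpace A := ⊥
  have hpt : ptTop A = @Pi.topologicalSpace A (fun _ => A) (fun _ => tA) := rfl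
  intro β
  set s : Set (A ≃[L] A) := {β : A ≃[L] A | ∃ α : A ≃[L] A, ⇑α ∘ ⇑f = ⇑f ∘ ⇑β} with hs
  rw [closure_induced]
  rw [hpt]
  rw [mem_closure_iff]
  intro O hO hβO
  obtain ⟨I, u, hu, hIu⟩ := (isOpen_pi_iff.1 hO) (⇑β) hβO
  obtain ⟨γ, hγB, hγI⟩ := key β I
  refine ⟨⇑γ, hIu fun a ha => ?_, ⟨γ, hγB, rfl⟩⟩
  rw [hγI a ha]
  exact (hu a ha).2


end Paper
end

section
/- Let A be a countable homogeneous structure and let f be a self-embedding of A such that the substructure generated by im(f) is superhomogeneous in A. Then I(f) = im(f), where I(f) := ⋃_{x ∈ A} f*(x) and f*(x) is the intersection of the fixed-point sets of the first coordinates α over all pairs (α, β) ∈ Aut(A)² with α ∘ f = f ∘ β and β(x) = x. -/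
open FirstOrder Language Set Cardinal Topology

universe u v w

namespace Paper

variable (L : FirstOrder.Language.{u, v}) (M : Type w) [L.Structure M]

variable (L : FirstOrder.Language.{u, v}) (M : Type w) [L.Structure M]

/-- Let `A` be a countable homogeneous structure and `f` a self-embedding of
`A` such that the substructure generated by the image of `f` is superhomogeneous in `A`. Then
`I(f) = im(f)`. -/
theorem statement_10 (L : FirstOrder.Language.{u, v}) (A : Type w) [L.Structure A] [Countable A]
    (hhom : L.IsUltrahomogeneous A) (f : A ↪[L] A)
    (hsup : IsSuperhomogeneous L A (Substructure.closure L (Set.range ⇑f))) :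
    (⋃ x : A,
      ⋂ p ∈ {p : (A ≃[L] A) × (A ≃[L] A) | ⇑p.1 ∘ ⇑f = ⇑f ∘ ⇑p.2 ∧ p.2 x = x},
        {y : A | p.1 y = y}) = Set.range ⇑f := by
  have hV : ((Substructure.closure L (Set.range ⇑f) : L.Substructure A) : Set A)
      = Set.range ⇑f := by
    have h1 : Set.range ⇑f = ((Hom.range f.toHom : L.Substructure A) : Set A) := by
      rw [Hom.range_coe]; rfl
    rw [h1, Substructure.closure_eq]
  apply Set.Subset.antisymm
  · rintro y hy
    obtain ⟨_, ⟨x, rfl⟩, hy⟩ := hy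
    by_contra hyV
    have hyV' : y ∉ Substructure.closure L (Set.range ⇑f) := fun h =>
      hyV (hV ▸ (SetLike.mem_coe.mpr h))
    obtain ⟨g, hg1, hg2⟩ := hsup.2 y hyV'
    apply hg2
    have hmem : (g, Language.Equiv.refl L A) ∈
        {p : (A ≃[L] A) × (A ≃[L] A) | ⇑p.1 ∘ ⇑f = ⇑f ∘ ⇑p.2 ∧ p.2 x = x} := by
      constructor
      · funext a
        simp only [Function.comp_apply, Equiv.refl_apply]
        exact hg1 (f a) (Substructure.subset_closure (L := L) (Set.mem_range_self a))
      · rfl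
    simpa using Set.mem_iInter₂.mp hy (g, Language.Equiv.refl L A) hmem
  · rintro y ⟨x, rfl⟩
    refine Set.mem_iUnion.mpr ⟨x, ?_⟩
    refine Set.mem_biInter fun p hp => ?_
    have : p.1 (f x) = f (p.2 x) := congrFun hp.1 x
    simp only [Set.mem_setOf_eq, this, hp.2]

end Paper
end

section
/- Let U be a countable homogeneous structure, let ι be a monoid endomorphism of Emb(U) that fixes every automorphism of U, and let h ∈ Emb(U) be such that the substructure generated by im(h) is superhomogeneous in U. Then im(h) = im(ι(h)). -/
open FirstOrder Language Set Cardinal Topology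

universe u v w

namespace Paper

variable (L : FirstOrder.Language.{u, v}) (M : Type w) [L.Structure M]

variable (L : FirstOrder.Language.{u, v}) (M : Type w) [L.Structure M]

/-- Let `U` be a countable homogeneous structure, `ι` a monoid endomorphism
of `Emb(U)` fixing every automorphism of `U`, and `h ∈ Emb(U)` such that the substructure
generated by the image of `h` is superhomogeneous in `U`. Then `im(h) = im(ι h)`. -/
theorem statement_11 (L : FirstOrder.Language.{u, v}) (U : Type w) [L.Structure U] [Countable U]
    (hhom : L.IsUltrahomogeneous U)
    (ι : embM L U →* embM L U)
    (hfix : ∀ f : embM L U, (∃ e : U ≃[L] U, (⇑e : U → U) = (f : Function.End U)) → ι f = f)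
    (h : embM L U)
    (hsup : IsSuperhomogeneous L U
      (Substructure.closure L (Set.range ((h : Function.End U) : U → U)))) :
    Set.range ((h : Function.End U) : U → U) =
      Set.range (((ι h : embM L U) : Function.End U) : U → U) := by
  classical
  obtain ⟨eh, heh⟩ := h.2
  obtain ⟨eh', heh'⟩ := (ι h).2
  set V : L.Substructure U :=
    Substructure.closure L (Set.range ((h : Function.End U) : U → U)) with hVdef
  have hVset : (V : Set U) = Set.range ⇑eh := by
    rw [hVdef, ← heh, ← Embedding.coe_toHom (f := eh), ← Hom.range_coe,
      Substructure.closure_eq]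
  have hmemV : ∀ x : U, eh x ∈ V := by
    intro x
    have hx : eh x ∈ (V : Set U) := by rw [hVset]; exact ⟨x, rfl⟩
    exact hx
  -- Easy direction: the range of `ι h` is contained in the range of `h`.
  have hsub : ∀ y : U, (∃ x, eh' x = y) → ∃ x, eh x = y := by
    rintro y ⟨x, rfl⟩
    by_contra hy
    have hyV : eh' x ∉ V := by
      intro hmem
      apply hy
      have hmem' : eh' x ∈ (V : Set U) := hmem
      rw [hVset] at hmem'
      exact hmem'
    obtain ⟨g, hg1, hg2⟩ := hsup.2 (eh' x) hyV
    refine hg2 ?_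
    have hGmem : (⇑g : Function.End U) ∈ embM L U := ⟨g.toEmbedding, rfl⟩
    set G : embM L U := ⟨⇑g, hGmem⟩ with hGdef
    have hGh : G * h = h := by
      apply Subtype.ext
      funext z
      show g ((h : Function.End U) z) = (h : Function.End U) z
      rw [← heh]
      exact hg1 (eh z) (hmemV z)
    have key : G * ι h = ι h := by
      have hι := congrArg ι hGh
      rwa [map_mul, hfix G ⟨g, rfl⟩] at hι
    have hk := congrFun (congrArg Subtype.val key) x
    show g (eh' x) = eh' x
    rw [heh']
    exact hk
  -- Hard direction: the range of `h` is contained in the range of `ι h`.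
  have hsub2 : ∀ x₀ : U, ∃ x, eh' x = eh x₀ := by
    intro x₀
    set C : L.Substructure U := Substructure.closure L ({x₀} : Set U) with hCdef
    set S : L.Substructure U := C.map eh'.toHom with hSdef
    have hSle : S ≤ V := by
      rintro y ⟨c, hc, rfl⟩
      obtain ⟨z, hz⟩ := hsub (eh'.toHom c) ⟨c, rfl⟩
      rw [← hz]
      exact hmemV z
    have hSfg : S.FG := (Substructure.fg_closure_singleton x₀).map eh'.toHom
    set E := eh'.substructureEquivMap C with hEdef
    set F : S ↪[L] U := (eh.comp C.subtype).comp E.symm.toEmbedding with hFdef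
    have hFapp : ∀ s : S, F s = eh ((E.symm s : C) : U) := fun s => rfl
    have hFV : ∀ s : S, F s ∈ V := by
      intro s
      rw [hFapp]
      exact hmemV _
    have hx₀C : x₀ ∈ C := Substructure.subset_closure rfl
    have hs₀S : eh' x₀ ∈ S := Substructure.mem_map.mpr ⟨x₀, hx₀C, rfl⟩
    have hEsymm : ((E.symm ⟨eh' x₀, hs₀S⟩ : C) : U) = x₀ := by
      apply eh'.injective
      calc eh' ((E.symm ⟨eh' x₀, hs₀S⟩ : C) : U)
          = ((E (E.symm ⟨eh' x₀, hs₀S⟩) : S) : U) :=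
            (Embedding.substructureEquivMap_apply eh' C _).symm
        _ = ((⟨eh' x₀, hs₀S⟩ : S) : U) := by rw [Language.Equiv.apply_symm_apply]
        _ = eh' x₀ := rfl
    have hFs₀ : F ⟨eh' x₀, hs₀S⟩ = eh x₀ := by
      rw [hFapp, hEsymm]
    obtain ⟨g, hgag, hgV⟩ := hsup.1 S hSle hSfg F hFV
    -- build the automorphism `a` with `g ∘ eh = eh ∘ a`
    have hgmapsV : ∀ x : U, ∃ y : U, eh y = g (eh x) := by
      intro x
      have h1 : g (eh x) ∈ (V : Set U) := by
        rw [← hgV]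
        exact ⟨eh x, hmemV x, rfl⟩
      rw [hVset] at h1
      obtain ⟨y, hy⟩ := h1
      exact ⟨y, hy⟩
    choose A hA using hgmapsV
    have hAinj : Function.Injective A := by
      intro a b hab
      have h1 : g (eh a) = g (eh b) := by rw [← hA, ← hA, hab]
      exact eh.injective (g.injective h1)
    have hAsurj : Function.Surjective A := by
      intro y
      have h1 : eh y ∈ (V : Set U) := hmemV y
      rw [← hgV] at h1
      obtain ⟨v, hv, hgv⟩ := h1
      rw [hVset] at hv
      obtain ⟨z, rfl⟩ := hv
      refine ⟨z, eh.injective ?_⟩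
      rw [hA z, hgv]
    set aEq : U ≃[L] U :=
      { toEquiv := Equiv.ofBijective A ⟨hAinj, hAsurj⟩
        map_fun' := by
          intro n f x
          apply eh.injective
          show eh (A (Structure.funMap f x)) = eh (Structure.funMap f (A ∘ x))
          rw [hA, eh.map_fun, eh.map_fun, g.map_fun]
          congr 1
          funext i
          exact (hA (x i)).symm
        map_rel' := by
          intro n r x
          show Structure.RelMap r (A ∘ x) ↔ Structure.RelMap r x
          have h1 : (⇑eh ∘ (A ∘ x)) = (⇑g ∘ (⇑eh ∘ x)) := by
            funext i
            exact hA (x i)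
          rw [← eh.map_rel r (A ∘ x), h1, g.map_rel, eh.map_rel] } with haEqdef
    have haEq : ∀ x : U, eh (aEq x) = g (eh x) := fun x => hA x
    have hGmem : (⇑g : Function.End U) ∈ embM L U := ⟨g.toEmbedding, rfl⟩
    have hAmem : (⇑aEq : Function.End U) ∈ embM L U := ⟨aEq.toEmbedding, rfl⟩
    set G : embM L U := ⟨⇑g, hGmem⟩ with hGdef
    set AEl : embM L U := ⟨⇑aEq, hAmem⟩ with hAEldef
    have hrel : G * h = h * AEl := by
      apply Subtype.ext
      funext z
      show g ((h : Function.End U) z) = (h : Function.End U) (aEq z)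
      rw [← heh]
      exact (haEq z).symm
    have key : G * ι h = ι h * AEl := by
      have hι := congrArg ι hrel
      rwa [map_mul, map_mul, hfix G ⟨g, rfl⟩, hfix AEl ⟨aEq, rfl⟩] at hι
    have hkey := congrFun (congrArg Subtype.val key) x₀
    refine ⟨aEq x₀, ?_⟩
    have h2 : g (eh' x₀) = eh x₀ := by
      have h3 := hgag ⟨eh' x₀, hs₀S⟩
      rw [hFs₀] at h3
      exact h3
    have h4 : g (eh' x₀) = eh' (aEq x₀) := by
      rw [heh']
      exact hkey
    rw [← h4, h2]
  -- Conclusion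
  ext y
  constructor
  · rintro ⟨x, rfl⟩
    obtain ⟨z, hz⟩ := hsub2 x
    refine ⟨z, ?_⟩
    show (((ι h : embM L U) : Function.End U) : U → U) z = _
    rw [← heh', hz, heh]
  · rintro ⟨x, rfl⟩
    obtain ⟨z, hz⟩ := hsub (eh' x) ⟨x, rfl⟩
    refine ⟨z, ?_⟩
    show ((h : Function.End U) : U → U) z = _
    rw [← heh, hz, heh']

end Paper
end

section
/- Let U be a countable homogeneous structure and let f, g be self-embeddings of U with the same image, and suppose this common image is superhomogeneous in U. Then f* = g* if and only if there exists ζ in the center of Aut(U) with g = f ∘ ζ, where f* := {(α, β) ∈ Aut(U)² : α ∘ f = f ∘ β}. -/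
open FirstOrder Language Set Cardinal Topology

universe u v w

namespace Paper

variable (L : FirstOrder.Language.{u, v}) (M : Type w) [L.Structure M]

variable (L : FirstOrder.Language.{u, v}) (M : Type w) [L.Structure M]

/-- An L-equivalence from a surjective self-embedding. -/
noncomputable def equivOfSurj {L : FirstOrder.Language} {U : Type*} [L.Structure U]
    (e : U ↪[L] U) (h : Function.Surjective ⇑e) : U ≃[L] U where
  toEquiv := _root_.Equiv.ofBijective ⇑e ⟨e.injective, h⟩
  map_fun' := e.map_fun'
  map_rel' := e.map_rel'

@[simp] lemma equivOfSurj_apply {L : FirstOrder.Language} {U : Type*} [L.Structure U]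
    (e : U ↪[L] U) (h : Function.Surjective ⇑e) (x : U) : equivOfSurj e h x = e x := rfl

lemma apply_equivRange_symm {L : FirstOrder.Language} {U : Type*} [L.Structure U]
    (f : U ↪[L] U) (y : f.toHom.range) : f (f.equivRange.symm y) = ↑y := by
  conv_rhs => rw [← f.equivRange.apply_symm_apply y]
  rfl

lemma equivRange_symm_mk {L : FirstOrder.Language} {U : Type*} [L.Structure U]
    (f : U ↪[L] U) (x : U) (h : f x ∈ f.toHom.range) :
    f.equivRange.symm ⟨f x, h⟩ = x :=
  f.injective (by rw [apply_equivRange_symm])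

/-- Let `U` be a countable homogeneous structure and `f, g` self-embeddings
of `U` with the same superhomogeneous image. Then `f* = g*` iff `g = f ∘ ζ` for some `ζ` in
the center of `Aut(U)`. -/
theorem statement_12 (L : FirstOrder.Language.{u, v}) (U : Type w) [L.Structure U] [Countable U]
    (hhom : L.IsUltrahomogeneous U) (f g : U ↪[L] U)
    (him : Set.range ⇑f = Set.range ⇑g)
    (hsup : IsSuperhomogeneous L U f.toHom.range) :
    {p : (U ≃[L] U) × (U ≃[L] U) | ⇑p.1 ∘ ⇑f = ⇑f ∘ ⇑p.2} =
      {p : (U ≃[L] U) × (U ≃[L] U) | ⇑p.1 ∘ ⇑g = ⇑g ∘ ⇑p.2} ↔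
    ∃ ζ : U ≃[L] U, (∀ δ : U ≃[L] U, ∀ x : U, ζ (δ x) = δ (ζ x)) ∧ ⇑g = ⇑f ∘ ⇑ζ := by
  classical
  have hgmem : ∀ x, g x ∈ f.toHom.range := fun x => by
    rw [Hom.mem_range]
    have : g x ∈ Set.range ⇑f := him ▸ Set.mem_range_self x
    obtain ⟨y, hy⟩ := this
    exact ⟨y, hy⟩
  let ζemb : U ↪[L] U := f.equivRange.symm.toEmbedding.comp
    (Language.Embedding.codRestrict f.toHom.range g hgmem)
  have hfζ : ∀ x, f (ζemb x) = g x := fun x => apply_equivRange_symm f _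
  have hζsurj : Function.Surjective ⇑ζemb := by
    intro u
    have : f u ∈ Set.range ⇑g := him ▸ Set.mem_range_self u
    obtain ⟨x, hx⟩ := this
    exact ⟨x, f.injective (by rw [hfζ, hx])⟩
  let ζ₀ : U ≃[L] U := equivOfSurj ζemb hζsurj
  have hfζ₀ : ∀ x, f (ζ₀ x) = g x := hfζ
  constructor
  · intro hset
    refine ⟨ζ₀, ?_, funext fun x => (hfζ₀ x).symm⟩
    intro δ x
    set V := f.toHom.range with hV
    have hfx : f x ∈ V := f.toHom.mem_range_self x
    have hfzx : f (ζ₀ x) ∈ V := f.toHom.mem_range_self _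
    set s : Set U := {f x, f (ζ₀ x)} with hs
    have hsub : s ⊆ ↑V := by
      rintro y (rfl | rfl)
      · exact hfx
      · exact hfzx
    set S := Substructure.closure L s with hSdef
    have hSV : S ≤ V := (Substructure.closure_le).2 hsub
    have hFG : S.FG := Substructure.fg_closure ((Set.finite_singleton _).insert _)
    let φ : S ↪[L] U := ((f.comp δ.toEmbedding).comp f.equivRange.symm.toEmbedding).comp
      (Substructure.inclusion hSV)
    have hφV : ∀ t : S, φ t ∈ V := fun t => f.toHom.mem_range_self _
    obtain ⟨α, hα1, hα2⟩ := hsup.1 S hSV hFG φ hφV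
    have hαV : ∀ u : U, u ∈ V → α u ∈ V := fun u hu => by
      have : α u ∈ ⇑α '' (V : Set U) := Set.mem_image_of_mem _ hu
      rw [hα2] at this
      exact this
    let βemb : U ↪[L] U := f.equivRange.symm.toEmbedding.comp
      (Language.Embedding.codRestrict V (α.toEmbedding.comp f)
        (fun u => hαV _ (f.toHom.mem_range_self u)))
    have hβf : ∀ u, f (βemb u) = α (f u) := fun u => apply_equivRange_symm f _
    have hβsurj : Function.Surjective ⇑βemb := by
      intro u
      have hu : f u ∈ ⇑α '' (V : Set U) := by
        rw [hα2]; exact f.toHom.mem_range_self u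
      obtain ⟨w, hwV, hw⟩ := hu
      obtain ⟨v, hv⟩ := Hom.mem_range.1 hwV
      exact ⟨v, f.injective (by rw [hβf]; show α (f v) = f u; rw [show f v = w from hv, hw])⟩
    let β : U ≃[L] U := equivOfSurj βemb hβsurj
    have hβf' : ∀ u, f (β u) = α (f u) := hβf
    have hpair : ⇑α ∘ ⇑f = ⇑f ∘ ⇑β := funext fun u => (hβf' u).symm
    have hpair' : ⇑α ∘ ⇑g = ⇑g ∘ ⇑β := by
      have hmem : (α, β) ∈ {p : (U ≃[L] U) × (U ≃[L] U) | ⇑p.1 ∘ ⇑f = ⇑f ∘ ⇑p.2} := hpair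
      rw [hset] at hmem
      exact hmem
    have hmemS1 : f x ∈ S := Substructure.subset_closure (Set.mem_insert _ _)
    have hmemS2 : f (ζ₀ x) ∈ S :=
      Substructure.subset_closure (Set.mem_insert_iff.2 (Or.inr rfl))
    have hφ1 : φ (⟨f x, hmemS1⟩ : S) = f (δ x) := by
      show f (δ (f.equivRange.symm (Substructure.inclusion hSV ⟨f x, hmemS1⟩))) = f (δ x)
      rw [show (Substructure.inclusion hSV (⟨f x, hmemS1⟩ : S)) = ⟨f x, hSV hmemS1⟩ from rfl,
        equivRange_symm_mk]
    have hφ2 : φ (⟨f (ζ₀ x), hmemS2⟩ : S) = f (δ (ζ₀ x)) := by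
      show f (δ (f.equivRange.symm (Substructure.inclusion hSV ⟨f (ζ₀ x), hmemS2⟩))) =
        f (δ (ζ₀ x))
      rw [show (Substructure.inclusion hSV (⟨f (ζ₀ x), hmemS2⟩ : S)) =
          ⟨f (ζ₀ x), hSV hmemS2⟩ from rfl, equivRange_symm_mk]
    have hβx : β x = δ x := f.injective (by
      rw [hβf' x, hα1 ⟨f x, hmemS1⟩, hφ1])
    have hβzx : β (ζ₀ x) = δ (ζ₀ x) := f.injective (by
      rw [hβf' (ζ₀ x), hα1 ⟨f (ζ₀ x), hmemS2⟩, hφ2])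
    have hcomm : ζ₀ (β x) = β (ζ₀ x) := f.injective (by
      have h1 : α (f (ζ₀ x)) = f (β (ζ₀ x)) := congrFun hpair (ζ₀ x)
      have h2 : α (g x) = g (β x) := congrFun hpair' x
      rw [← hfζ₀ x, ← hfζ₀ (β x)] at h2
      rw [← h2, ← h1])
    rw [← hβx, hcomm, hβzx]
  · rintro ⟨ζ, hc, hζ⟩
    ext ⟨α, β⟩
    simp only [Set.mem_setOf_eq]
    constructor
    · intro h
      funext u
      have h1 : α (f (ζ u)) = f (β (ζ u)) := congrFun h (ζ u)
      show α (g u) = g (β u)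
      rw [congrFun hζ u, congrFun hζ (β u)]
      show α (f (ζ u)) = f (ζ (β u))
      rw [h1, hc β u]
    · intro h
      funext y
      obtain ⟨u, rfl⟩ := ζ.surjective y
      have h2 : α (g u) = g (β u) := congrFun h u
      rw [congrFun hζ u, congrFun hζ (β u)] at h2
      have h2' : α (f (ζ u)) = f (ζ (β u)) := h2
      show α (f (ζ u)) = f (β (ζ u))
      rw [h2', hc β u]


end Paper
end
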